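/- Let y ∈ R^n with ‖y‖_p^p = n (p ≥ 1), and suppose there exists an index k with ||y_k| − 1| ≥ c for some c ∈ (0, 1/2]. Then there exists an index m (indices mod n) such that ||y_m| − |y_{m+1}|| ≥ c/n and max(|y_m|, |y_{m+1}|) ≥ 1 − c. -/

import Mathlib

/-!
Since `∑ |y i| ^ p = n`, some coordinate has `|y i| ≥ 1` and some has `|y j| ≤ 1`. If
`|y k| ≥ 1 + c`, walk cyclically from `k` to such a `j`; if `|y k| ≤ 1 - c`, walk from such an
`i` to `k`. Either way the absolute values fall by at least `c` in at most `n` steps, from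
above `B + c` to at most `B` (with `B = 1`, resp. `B = 1 - c`), and clipping the walk below at
`B` shows that one of these steps drops by at least `c / n` while starting at least `B`.
-/

open Finset
open scoped Fin.NatCast Fin.CommRing

lemma exists_lt_div_le_sub_succ (u : ℕ → ℝ) {L : ℕ} (hL : 0 < L) :
    ∃ t < L, (u 0 - u L) / L ≤ u t - u (t + 1) := by
  have hsum : ∑ _t ∈ range L, (u 0 - u L) / L ≤ ∑ t ∈ range L, (u t - u (t + 1)) := by
    rw [sum_range_sub', sum_const, card_range, nsmul_eq_mul]
    field_simp
    rfl
  obtain ⟨t, ht, hle⟩ := exists_le_of_sum_le (nonempty_range_iff.mpr hL.ne') hsum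
  exact ⟨t, mem_range.mp ht, hle⟩

lemma exists_le_sub_succ_of_le_of_le (g : ℕ → ℝ) {n L : ℕ} {B c : ℝ} (hc : 0 < c)
    (hL : L ≤ n) (h0 : B + c ≤ g 0) (hgL : g L ≤ B) :
    ∃ t, c / n ≤ g t - g (t + 1) ∧ B ≤ g t := by
  have hLpos : 0 < L := Nat.pos_of_ne_zero fun h ↦ by subst h; linarith
  let clip : ℕ → ℝ := fun t ↦ max (g t) B
  obtain ⟨t, -, ht⟩ := exists_lt_div_le_sub_succ clip hLpos
  have hcL : c / n ≤ c / L := div_le_div_of_nonneg_left hc.le (by positivity) (by exact_mod_cast hL)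
  have hdrop : c / L ≤ (clip 0 - clip L) / L := by
    gcongr
    have : clip 0 = g 0 := max_eq_left (by linarith)
    have : clip L = B := max_eq_right hgL
    linarith
  have hpos : 0 < clip t - clip (t + 1) := lt_of_lt_of_le (by positivity) (hdrop.trans ht)
  have hclip : clip t = g t := by
    by_contra hne
    have : clip t = B := max_eq_right (le_of_not_ge fun hle ↦ hne (max_eq_left hle))
    linarith [le_max_right (g (t + 1)) B]
  refine ⟨t, ?_, hclip ▸ le_max_right _ _⟩
  linarith [le_max_left (g (t + 1)) B]

lemma Fin.exists_le_sub_add_one_of_le_of_le {n : ℕ} [NeZero n] (f : Fin n → ℝ) {a b : Fin n}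
    {B c : ℝ} (hc : 0 < c) (ha : B + c ≤ f a) (hb : f b ≤ B) :
    ∃ m, c / n ≤ f m - f (m + 1) ∧ B ≤ f m := by
  obtain ⟨t, hdrop, hB⟩ := exists_le_sub_succ_of_le_of_le (fun t : ℕ ↦ f (a + t)) hc
    (b - a).is_lt.le (by simpa using ha) (by simpa [Fin.cast_val_eq_self] using hb)
  refine ⟨a + t, ?_, hB⟩
  simpa [add_assoc] using hdrop

lemma exists_one_le_of_sum_rpow_eq_card {ι : Type*} [Fintype ι] [Nonempty ι] {x : ι → ℝ}
    (hx : ∀ i, 0 ≤ x i) {p : ℝ} (hp : 0 < p) (hsum : ∑ i, x i ^ p = Fintype.card ι) :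
    ∃ i, 1 ≤ x i := by
  obtain ⟨i, -, hi⟩ := exists_le_of_sum_le (f := fun _ ↦ (1 : ℝ)) (g := fun i ↦ x i ^ p) univ_nonempty
    (by simp [hsum])
  exact ⟨i, le_of_not_gt fun hlt ↦ (Real.rpow_lt_one (hx i) hlt hp).not_ge hi⟩

lemma exists_le_one_of_sum_rpow_eq_card {ι : Type*} [Fintype ι] [Nonempty ι] {x : ι → ℝ}
    {p : ℝ} (hp : 0 < p) (hsum : ∑ i, x i ^ p = Fintype.card ι) :
    ∃ i, x i ≤ 1 := by
  obtain ⟨i, -, hi⟩ := exists_le_of_sum_le (f := fun i ↦ x i ^ p) (g := fun _ ↦ (1 : ℝ)) univ_nonempty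
    (by simp [hsum])
  exact ⟨i, le_of_not_gt fun hlt ↦ (Real.one_lt_rpow hlt hp).not_ge hi⟩

/-- If `‖y‖_p^p = n` and some coordinate has `||y_k| - 1| ≥ c`, then some cyclically
adjacent pair of coordinates differs in absolute value by at least `c/n`, with one of
the two at least `1 - c`. -/
theorem stmt_14 (n : ℕ) (hn : 2 ≤ n) (p c : ℝ) (hp : 1 ≤ p) (hc0 : 0 < c)
    (y : Fin n → ℝ) (hy : (∑ i, |y i| ^ p) = n) (k : Fin n) (hk : c ≤ |(|y k| - 1)|) :
    ∃ m : Fin n, c / n ≤ |(|y m| - |y (m + ⟨1, by omega⟩)|)| ∧ 1 - c ≤ max |y m| |y (m + ⟨1, by omega⟩)| := by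
  have : NeZero n := ⟨by omega⟩
  have hone : (⟨1, by omega⟩ : Fin n) = 1 := Fin.ext (Nat.mod_eq_of_lt (by omega)).symm
  have hp0 : 0 < p := by linarith
  have hcard : ∑ i, |y i| ^ p = Fintype.card (Fin n) := by simpa using hy
  suffices ∃ m, c / n ≤ |y m| - |y (m + 1)| ∧ 1 - c ≤ |y m| by
    obtain ⟨m, hdrop, hB⟩ := this
    exact ⟨m, hone ▸ hdrop.trans (le_abs_self _), hone ▸ hB.trans (le_max_left _ _)⟩
  rcases le_abs.mp hk with hup | hdown
  · obtain ⟨j, hj⟩ := exists_le_one_of_sum_rpow_eq_card hp0 hcard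
    obtain ⟨m, hdrop, hB⟩ :=
      Fin.exists_le_sub_add_one_of_le_of_le (fun i ↦ |y i|) hc0 (by linarith : 1 + c ≤ |y k|) hj
    exact ⟨m, hdrop, by linarith⟩
  · obtain ⟨i, hi⟩ := exists_one_le_of_sum_rpow_eq_card (fun i ↦ abs_nonneg (y i)) hp0 hcard
    exact Fin.exists_le_sub_add_one_of_le_of_le (fun i ↦ |y i|) hc0
      (by linarith : 1 - c + c ≤ |y i|) (by linarith : |y k| ≤ 1 - c)
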